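/- Every solution of Kamke's ODE 120, t·y′(t) = y(t)·(t·ln(t²/y(t)) + 2) with t > 0 and y(t) > 0, is of the form y(t) = t²·exp(c·e^{−t}) for some real constant c; conversely, for every real c, the function y(t) = t²·exp(c·e^{−t}) solves the ODE for all t > 0. -/

import Mathlib

/-!
With `z = log (y / t²) = log y - 2 log t`, Kamke's equation becomes `z' = y'/y - 2/t = log (t²/y) = -z`,
so `eᵗ z` has derivative zero on `t > 0`, i.e. `z = c e⁻ᵗ` and `y = t² exp (c e⁻ᵗ)`.
-/

open Real Set

theorem IsOpen.exists_eq_mul_exp_neg_of_hasDerivAt {s : Set ℝ} {f : ℝ → ℝ} (hs : IsOpen s)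
    (hs' : IsPreconnected s) (hf : ∀ t ∈ s, HasDerivAt f (-f t) t) :
    ∃ c, ∀ t ∈ s, f t = c * exp (-t) := by
  have hg : ∀ t ∈ s, HasDerivAt (fun u => exp u * f u) 0 t := fun t ht => by
    simpa using (hasDerivAt_exp t).fun_mul (hf t ht)
  obtain ⟨c, hc⟩ := hs.exists_is_const_of_deriv_eq_zero hs'
    (fun t ht => (hg t ht).differentiableAt.differentiableWithinAt) (fun t ht => (hg t ht).deriv)
  refine ⟨c, fun t ht => ?_⟩
  rw [← hc t ht, mul_comm (exp t), mul_assoc, ← exp_add]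
  simp

theorem hasDerivAt_log_sub_two_mul_log_of_kamke120 {y : ℝ → ℝ} {t : ℝ} (ht : 0 < t)
    (hy : 0 < y t) (hdiff : DifferentiableAt ℝ y t)
    (hode : t * deriv y t = y t * (t * log (t ^ 2 / y t) + 2)) :
    HasDerivAt (fun s => log (y s) - 2 * log s) (-(log (y t) - 2 * log t)) t := by
  refine ((hdiff.hasDerivAt.log hy.ne').fun_sub
    ((hasDerivAt_log ht.ne').const_mul 2)).congr_deriv ?_
  rw [log_div (by positivity) hy.ne', log_pow] at hode
  field_simp
  push_cast at hode
  linarith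

theorem eq_sq_mul_exp_of_log_sub_two_mul_log {y t z : ℝ} (ht : 0 < t) (hy : 0 < y)
    (hz : log y - 2 * log t = z) : y = t ^ 2 * exp z := by
  rw [← exp_log hy, ← exp_log (pow_pos ht 2), ← exp_add, log_pow]
  push_cast
  congr 1
  linarith

theorem hasDerivAt_sq_mul_exp_mul_exp_neg (c t : ℝ) :
    HasDerivAt (fun u : ℝ => u ^ 2 * exp (c * exp (-u)))
      (2 * t * exp (c * exp (-t)) + t ^ 2 * (exp (c * exp (-t)) * (c * -exp (-t)))) t := by
  have hinner : HasDerivAt (fun u : ℝ => c * exp (-u)) (c * -exp (-t)) t := by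
    simpa using ((hasDerivAt_neg t).exp).const_mul c
  simpa using (hasDerivAt_pow 2 t).fun_mul hinner.exp

theorem stmt4 :
    (∀ y : ℝ → ℝ,
      (∀ t : ℝ, 0 < t → 0 < y t) →
      (∀ t : ℝ, 0 < t → DifferentiableAt ℝ y t) →
      (∀ t : ℝ, 0 < t →
        t * deriv y t = y t * (t * Real.log (t ^ 2 / y t) + 2)) →
      ∃ c : ℝ, ∀ t : ℝ, 0 < t → y t = t ^ 2 * Real.exp (c * Real.exp (-t)))
    ∧ (∀ c : ℝ, ∀ t : ℝ, 0 < t →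
        t * deriv (fun u : ℝ => u ^ 2 * Real.exp (c * Real.exp (-u))) t
          = (t ^ 2 * Real.exp (c * Real.exp (-t)))
            * (t * Real.log (t ^ 2 / (t ^ 2 * Real.exp (c * Real.exp (-t)))) + 2)) := by
  constructor
  · intro y hpos hdiff hode
    obtain ⟨c, hc⟩ := isOpen_Ioi.exists_eq_mul_exp_neg_of_hasDerivAt isPreconnected_Ioi
      fun t (ht : 0 < t) =>
        hasDerivAt_log_sub_two_mul_log_of_kamke120 ht (hpos t ht) (hdiff t ht) (hode t ht)
    exact ⟨c, fun t ht => eq_sq_mul_exp_of_log_sub_two_mul_log ht (hpos t ht) (hc t ht)⟩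
  · intro c t ht
    have hlog : log (t ^ 2 / (t ^ 2 * exp (c * exp (-t)))) = -(c * exp (-t)) := by
      rw [div_mul_cancel_left₀ (by positivity), log_inv, log_exp]
    rw [(hasDerivAt_sq_mul_exp_mul_exp_neg c t).deriv, hlog]
    ring
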